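/- arXiv:1509.07941 — 3 statements merged into one kernel-verified Lean document; each statement's English description precedes it below -/
import Mathlib

section
/- Let j(n) be an integer-valued sequence with 0 < j(n) < n such that j(n) → ∞ and n − j(n) → ∞ as n → ∞. Define λ(n) = C(n, j(n))/j(n)! and d_1(n) = C(n, j(n))·( C(n, j(n)) − C(n−j(n), j(n)) )/(j(n)!)². Then d_1(n) is asymptotically equal to λ(n)²·(1 − e^{−j(n)²/n}), i.e., d_1(n) / ( λ(n)²·(1 − e^{−j(n)²/n}) ) → 1 as n → ∞. -/
/-! With `R = C(n-j, j) / C(n, j) = ∏_{i<j} (1 - j / (n - i))` the quotient in question is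
`(1 - R) / (1 - e^{-j²/n})`. Bounding the factors by `1 - j/n` and `1 - j/(n-j)` gives
`e^{-j²/(n-2j)} ≤ R ≤ e^{-j²/n}`, so the quotient is at least `1`. For the upper bound, either
`j²/n ≥ 1/ε`, and then the denominator already exceeds `1/(1+ε)`; or `j = O(√n)`, so
`c = n/(n-2j) ≤ 1 + ε`, and Bernoulli's inequality `1 - e^{-cx} ≤ c (1 - e^{-x})` applies. -/

open scoped Classical
open Filter

noncomputable section

/-- `τ` occurs in `σ` at the strictly increasing positions given by `f`:
`f` is strictly increasing and `σ ∘ f` is order-isomorphic to `τ`. -/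
def OccursAt {m n : ℕ} (τ : Equiv.Perm (Fin m)) (σ : Equiv.Perm (Fin n))
    (f : Fin m → Fin n) : Prop :=
  StrictMono f ∧ ∀ k l, σ (f k) < σ (f l) ↔ τ k < τ l

/-- `τ` occurs in `σ` at the set of positions `α` (listed in increasing order). -/
def OccursOn {m n : ℕ} (τ : Equiv.Perm (Fin m)) (σ : Equiv.Perm (Fin n))
    (α : Finset (Fin n)) : Prop :=
  ∃ f : Fin m → Fin n, StrictMono f ∧ Finset.univ.image f = α ∧
    ∀ k l, σ (f k) < σ (f l) ↔ τ k < τ l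

/-- `τ` occurs in `σ` at the consecutive (0-indexed) positions `i, i+1, …, i+m-1`. -/
def OccursConsec {m n : ℕ} (τ : Equiv.Perm (Fin m)) (σ : Equiv.Perm (Fin n)) (i : ℕ) : Prop :=
  ∃ h : i + m ≤ n, ∀ k l : Fin m,
    σ ⟨i + k, by have := k.isLt; omega⟩ < σ ⟨i + l, by have := l.isLt; omega⟩ ↔ τ k < τ l

/-- The overlap count `L_s(τ)`: the number of permutations of `[2m-s]` containing
two occurrences of `τ` at index sets sharing exactly `s` elements. -/
def overlapCount {m : ℕ} (τ : Equiv.Perm (Fin m)) (s : ℕ) : ℕ :=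
  Set.ncard {ρ : Equiv.Perm (Fin (2 * m - s)) |
    ∃ α β : Finset (Fin (2 * m - s)), α.card = m ∧ β.card = m ∧ (α ∩ β).card = s ∧
      OccursOn τ ρ α ∧ OccursOn τ ρ β}

/-- The sequential overlap count `L̄_s(τ)`: the number of permutations of `[2m-s]` with
occurrences of `τ` at positions `(1,…,m)` and `(m-s+1,…,2m-s)`. -/
def seqOverlapCount {m : ℕ} (τ : Equiv.Perm (Fin m)) (s : ℕ) : ℕ :=
  Set.ncard {ρ : Equiv.Perm (Fin (2 * m - s)) |
    OccursConsec τ ρ 0 ∧ OccursConsec τ ρ (m - s)}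

/-- The number of inversions of a permutation. -/
def invCount {n : ℕ} (σ : Equiv.Perm (Fin n)) : ℕ :=
  (Finset.univ.filter fun p : Fin n × Fin n => p.1 < p.2 ∧ σ p.2 < σ p.1).card

/-- The inversion polynomial `I_n(q) = ∏_{j=1}^n (1 + q + ⋯ + q^{j-1})`. -/
def invPoly (n : ℕ) (q : ℝ) : ℝ :=
  ∏ j ∈ Finset.range n, ∑ i ∈ Finset.range (j + 1), q ^ i

/-- Probability of the event `E` under the uniform distribution on `S_n`. -/
def unifProb {n : ℕ} (E : Set (Equiv.Perm (Fin n))) : ℝ :=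
  (E.ncard : ℝ) / (n.factorial : ℝ)

/-- Probability of the event `E` under the Mallows(q) distribution on `S_n`. -/
def mallowsProb {n : ℕ} (q : ℝ) (E : Set (Equiv.Perm (Fin n))) : ℝ :=
  (∑ σ ∈ Finset.univ.filter (· ∈ E), q ^ invCount σ) / invPoly n q

/-- Expectation of `X` under the uniform distribution on `S_n`. -/
def unifExp {n : ℕ} (X : Equiv.Perm (Fin n) → ℝ) : ℝ :=
  (∑ σ : Equiv.Perm (Fin n), X σ) / (n.factorial : ℝ)

/-- Expectation of `X` under the Mallows(q) distribution on `S_n`. -/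
def mallowsExp {n : ℕ} (q : ℝ) (X : Equiv.Perm (Fin n) → ℝ) : ℝ :=
  (∑ σ : Equiv.Perm (Fin n), X σ * q ^ invCount σ) / invPoly n q

/-- The Poisson(lam) probability mass function. -/
def poissonPMF (lam : ℝ) (k : ℕ) : ℝ :=
  Real.exp (-lam) * lam ^ k / (k.factorial : ℝ)

/-- Total variation distance between the law of the ℕ-valued statistic `W` of a uniformly
random permutation of `[n]` and the Poisson(lam) distribution. -/
def dTVNatUnif {n : ℕ} (W : Equiv.Perm (Fin n) → ℕ) (lam : ℝ) : ℝ :=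
  (1 / 2) * ∑' k : ℕ, |unifProb {σ | W σ = k} - poissonPMF lam k|

/-- Total variation distance between the law of the ℕ-valued statistic `W` of a Mallows(q)
random permutation of `[n]` and the Poisson(lam) distribution. -/
def dTVNatMallows {n : ℕ} (q : ℝ) (W : Equiv.Perm (Fin n) → ℕ) (lam : ℝ) : ℝ :=
  (1 / 2) * ∑' k : ℕ, |mallowsProb q {σ | W σ = k} - poissonPMF lam k|

/-- Total variation distance between the joint law of the indicator family
`(X_α)_{α ∈ I}` of a uniformly random permutation of `[n]` and the joint law of
independent Bernoulli random variables with marginals `p`. -/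
def dTVFamUnif {n : ℕ} {I : Type*} [Fintype I] [DecidableEq I]
    (X : Equiv.Perm (Fin n) → I → Prop) (p : I → ℝ) : ℝ :=
  (1 / 2) * ∑ x : I → Bool,
    |unifProb {σ | ∀ α, X σ α ↔ x α = true} - ∏ α, (if x α then p α else 1 - p α)|

/-- Total variation distance between the joint law of the indicator family
`(X_α)_{α ∈ I}` of a Mallows(q) random permutation of `[n]` and the joint law of
independent Bernoulli random variables with marginals `p`. -/
def dTVFamMallows {n : ℕ} (q : ℝ) {I : Type*} [Fintype I] [DecidableEq I]
    (X : Equiv.Perm (Fin n) → I → Prop) (p : I → ℝ) : ℝ :=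
  (1 / 2) * ∑ x : I → Bool,
    |mallowsProb q {σ | ∀ α, X σ α ↔ x α = true} - ∏ α, (if x α then p α else 1 - p α)|

open Finset Real

theorem Real.exp_neg_le_inv_add_one {x : ℝ} (hx : -1 < x) : exp (-x) ≤ (x + 1)⁻¹ := by
  rw [exp_neg]
  exact inv_anti₀ (by linarith) (add_one_le_exp x)

theorem Real.one_sub_exp_neg_mul_le {c : ℝ} (hc : 1 ≤ c) (x : ℝ) :
    1 - exp (-(c * x)) ≤ c * (1 - exp (-x)) := by
  have h := one_add_mul_self_le_rpow_one_add (s := exp (-x) - 1) (by linarith [exp_pos (-x)]) hc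
  rw [add_sub_cancel, ← exp_mul, neg_mul, mul_comm x] at h
  linarith

theorem Nat.choose_sub_div_choose_eq_prod {n j : ℕ} (h : 2 * j ≤ n) :
    ((n - j).choose j : ℝ) / n.choose j = ∏ i ∈ range j, (1 - (j : ℝ) / (n - i)) := by
  have hfac : (j.factorial : ℝ) ≠ 0 := by positivity
  rw [← mul_div_mul_left _ _ hfac]
  norm_cast
  rw [← Nat.descFactorial_eq_factorial_mul_choose, ← Nat.descFactorial_eq_factorial_mul_choose,
    Nat.descFactorial_eq_prod_range, Nat.descFactorial_eq_prod_range]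
  push_cast
  rw [← prod_div_distrib]
  refine prod_congr rfl fun i hi => ?_
  have hi : i < j := mem_range.1 hi
  have hpos : (0 : ℝ) < n - i := by
    rw [sub_pos]; exact_mod_cast (by omega : i < n)
  rw [Nat.cast_sub (by omega), Nat.cast_sub (by omega), Nat.cast_sub (by omega)]
  field_simp
  ring

theorem Nat.choose_sub_div_choose_le_exp (n j : ℕ) :
    ((n - j).choose j : ℝ) / n.choose j ≤ exp (-(j : ℝ) ^ 2 / n) := by
  rcases lt_or_ge n (2 * j) with h | h
  · rw [Nat.choose_eq_zero_of_lt (by omega), Nat.cast_zero, zero_div]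
    positivity
  have hjn : (j : ℝ) ≤ n := by exact_mod_cast (by omega : j ≤ n)
  calc ((n - j).choose j : ℝ) / n.choose j = ∏ i ∈ range j, (1 - (j : ℝ) / (n - i)) :=
        Nat.choose_sub_div_choose_eq_prod h
    _ ≤ ∏ _i ∈ range j, (1 - (j : ℝ) / n) := by
        refine prod_le_prod (fun i hi => ?_) (fun i hi => ?_) <;> have hi := mem_range.1 hi
        · have : (j : ℝ) + i ≤ n := by exact_mod_cast (by omega : j + i ≤ n)
          exact sub_nonneg.2 (div_le_one_of_le₀ (by linarith) (by linarith))
        · have : (i : ℝ) < n := by exact_mod_cast (by omega : i < n)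
          gcongr
          exact sub_le_self _ (Nat.cast_nonneg i)
    _ ≤ exp (-((j : ℝ) / n)) ^ j := by
        rw [prod_const, card_range]
        gcongr
        · exact sub_nonneg.2 (div_le_one_of_le₀ hjn (Nat.cast_nonneg n))
        · exact one_sub_le_exp_neg _
    _ = exp (-(j : ℝ) ^ 2 / n) := by rw [← exp_nat_mul]; ring_nf

theorem Nat.exp_neg_le_choose_sub_div_choose {n j : ℕ} (h : 2 * j < n) :
    exp (-((j : ℝ) ^ 2 / (n - 2 * j))) ≤ ((n - j).choose j : ℝ) / n.choose j := by
  have h' : 2 * (j : ℝ) < n := by exact_mod_cast h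
  have hbase : exp (-((j : ℝ) / (n - 2 * j))) ≤ 1 - j / (n - j) := by
    refine (exp_neg_le_inv_add_one ?_).trans_eq ?_
    · have : 0 ≤ (j : ℝ) / (n - 2 * j) := div_nonneg (Nat.cast_nonneg j) (by linarith)
      linarith
    · rw [div_add_one (by linarith), inv_div, one_sub_div (by linarith)]
      ring
  calc exp (-((j : ℝ) ^ 2 / (n - 2 * j))) = ∏ _i ∈ range j, exp (-((j : ℝ) / (n - 2 * j))) := by
        rw [prod_const, card_range, ← exp_nat_mul]; ring_nf
    _ ≤ ∏ i ∈ range j, (1 - (j : ℝ) / (n - i)) := by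
        refine prod_le_prod (fun i hi => (exp_pos _).le) (fun i hi => hbase.trans ?_)
        have hi : (i : ℝ) < j := by exact_mod_cast mem_range.1 hi
        gcongr
        linarith
    _ = ((n - j).choose j : ℝ) / n.choose j := (Nat.choose_sub_div_choose_eq_prod h.le).symm

theorem Nat.one_sub_choose_sub_div_choose_le_of_mul_le {ε : ℝ} {n j : ℕ} (hε : 0 ≤ ε)
    (hn : 0 < n) (h : 2 * (1 + ε) * j ≤ ε * n) :
    1 - ((n - j).choose j : ℝ) / n.choose j ≤ (1 + ε) * (1 - exp (-((j : ℝ) ^ 2 / n))) := by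
  have hn0 : (0 : ℝ) < n := by exact_mod_cast hn
  have h2j : 2 * (j : ℝ) < n := by nlinarith
  have hc : n / (n - 2 * j) * ((j : ℝ) ^ 2 / n) = (j : ℝ) ^ 2 / (n - 2 * j) := by
    field_simp
  have hexp : 0 ≤ 1 - exp (-((j : ℝ) ^ 2 / n)) :=
    sub_nonneg.2 (exp_le_one_iff.2 (neg_nonpos.2 (by positivity)))
  calc 1 - ((n - j).choose j : ℝ) / n.choose j
      ≤ 1 - exp (-(n / (n - 2 * j) * ((j : ℝ) ^ 2 / n))) := by
        rw [hc]
        linarith [Nat.exp_neg_le_choose_sub_div_choose (n := n) (j := j) (by exact_mod_cast h2j)]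
    _ ≤ n / (n - 2 * j) * (1 - exp (-((j : ℝ) ^ 2 / n))) :=
        one_sub_exp_neg_mul_le ((one_le_div (by linarith)).2 (by linarith)) _
    _ ≤ (1 + ε) * (1 - exp (-((j : ℝ) ^ 2 / n))) := by
        gcongr
        rw [div_le_iff₀ (by linarith)]
        linarith

theorem Nat.eventually_one_sub_choose_sub_div_choose_le {ε : ℝ} (hε : 0 < ε) :
    ∀ᶠ n : ℕ in atTop, ∀ j : ℕ,
      1 - ((n - j).choose j : ℝ) / n.choose j ≤ (1 + ε) * (1 - exp (-(j : ℝ) ^ 2 / n)) := by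
  -- the threshold is chosen so that `ε j ^ 2 < n` forces `2 (1 + ε) j ≤ ε n`
  filter_upwards [eventually_ge_atTop ⌈4 * (1 + ε) ^ 2 / ε ^ 3⌉₊] with n hn j
  have hN : 4 * (1 + ε) ^ 2 ≤ ε ^ 3 * n := by
    rw [← div_le_iff₀' (by positivity)]
    exact (Nat.le_ceil _).trans (by exact_mod_cast hn)
  have hn0 : (0 : ℝ) < n := pos_of_mul_pos_right (hN.trans_lt' (by positivity)) (by positivity)
  rw [neg_div]
  rcases le_or_gt 1 (ε * ((j : ℝ) ^ 2 / n)) with hlarge | hsmall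
  · set x : ℝ := (j : ℝ) ^ 2 / n
    have hR : 0 ≤ ((n - j).choose j : ℝ) / n.choose j := by positivity
    have hinv : (x + 1)⁻¹ * (x + 1) = 1 := inv_mul_cancel₀ (by positivity)
    calc 1 - ((n - j).choose j : ℝ) / n.choose j ≤ (1 + ε) * (1 - (x + 1)⁻¹) := by
          nlinarith
      _ ≤ (1 + ε) * (1 - exp (-x)) := by
          gcongr
          exact exp_neg_le_inv_add_one (by linarith [show 0 ≤ x by positivity])
  · refine Nat.one_sub_choose_sub_div_choose_le_of_mul_le hε.le (by exact_mod_cast hn0) ?_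
    have hjn : ε * (j : ℝ) ^ 2 < n := by
      rwa [← mul_div_assoc, div_lt_one hn0] at hsmall
    have hsq : ε * (2 * (1 + ε) * j) ^ 2 < ε * (ε * n) ^ 2 := by
      calc ε * (2 * (1 + ε) * j) ^ 2 = 4 * (1 + ε) ^ 2 * (ε * j ^ 2) := by ring
        _ < 4 * (1 + ε) ^ 2 * n := by gcongr
        _ ≤ ε ^ 3 * n * n := by gcongr
        _ = ε * (ε * n) ^ 2 := by ring
    replace hsq := lt_of_mul_lt_mul_left hsq hε.le
    exact ((pow_lt_pow_iff_left₀ (by positivity) (by positivity) two_ne_zero).1 hsq).le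

theorem stmt11_general (j : ℕ → ℕ)
    (hj : ∀ᶠ n in Filter.atTop, 0 < j n ∧ j n < n) :
    Filter.Tendsto (fun n : ℕ =>
        ((n.choose (j n) : ℝ) * ((n.choose (j n) : ℝ) - ((n - j n).choose (j n) : ℝ))
            / ((j n).factorial : ℝ) ^ 2)
          / (((n.choose (j n) : ℝ) / ((j n).factorial : ℝ)) ^ 2
              * (1 - Real.exp (-(j n : ℝ) ^ 2 / (n : ℝ)))))
      Filter.atTop (nhds 1) := by
  refine Tendsto.congr' (f₁ := fun n =>
    (1 - ((n - j n).choose (j n) : ℝ) / n.choose (j n)) / (1 - exp (-(j n : ℝ) ^ 2 / n))) ?_ ?_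
  · filter_upwards [hj] with n hn
    have : (n.choose (j n) : ℝ) ≠ 0 := by exact_mod_cast (Nat.choose_pos hn.2.le).ne'
    field_simp
  have hpos : ∀ᶠ n in atTop, 0 < 1 - exp (-(j n : ℝ) ^ 2 / n) := by
    filter_upwards [hj] with n ⟨hj0, hjn⟩
    have hn0 : (0 : ℝ) < n := by exact_mod_cast hj0.trans hjn
    have hj0' : (0 : ℝ) < j n := by exact_mod_cast hj0
    exact sub_pos.2 (exp_lt_one_iff.2 (div_neg_of_neg_of_pos (neg_neg_of_pos (by positivity)) hn0))
  refine tendsto_order.2 ⟨fun a ha => ?_, fun b hb => ?_⟩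
  · filter_upwards [hpos] with n hn
    rw [lt_div_iff₀ hn]
    exact (mul_lt_mul_of_pos_right ha hn).trans_le
      (by linarith [Nat.choose_sub_div_choose_le_exp n (j n)])
  · filter_upwards [hpos, Nat.eventually_one_sub_choose_sub_div_choose_le
      (half_pos (sub_pos.2 hb))] with n hn hle
    rw [div_lt_iff₀ hn]
    exact (hle (j n)).trans_lt (by gcongr; linarith)

/-- Lemma: if `j(n) → ∞` and `n − j(n) → ∞`, then
`d₁(n) ∼ λ(n)²·(1 − e^{−j(n)²/n})`. -/
theorem stmt11 (j : ℕ → ℕ)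
    (hj : ∀ᶠ n in Filter.atTop, 0 < j n ∧ j n < n)
    (hj2 : Filter.Tendsto j Filter.atTop Filter.atTop)
    (hnj : Filter.Tendsto (fun n => n - j n) Filter.atTop Filter.atTop) :
    Filter.Tendsto (fun n : ℕ =>
        ((n.choose (j n) : ℝ) * ((n.choose (j n) : ℝ) - ((n - j n).choose (j n) : ℝ))
            / ((j n).factorial : ℝ) ^ 2)
          / (((n.choose (j n) : ℝ) / ((j n).factorial : ℝ)) ^ 2
              * (1 - Real.exp (-(j n : ℝ) ^ 2 / (n : ℝ)))))
      Filter.atTop (nhds 1) :=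
  stmt11_general j hj

end
end

section
/- Let Σ_n be a uniformly random permutation of [n], let W be the number of fixed points of Σ_n, and let Y be a Poisson random variable with mean 1. Then for all n ≥ 1, d_TV( L(W), L(Y) ) ≤ 3·(1 − e^{−1})/n. Consequently, the number e(n) of derangements of [n] (permutations without fixed points) satisfies n!·e^{−1} − 3·(n−1)!·(1 − e^{−1}) ≤ e(n) ≤ n!·e^{−1} + 3·(n−1)!·(1 − e^{−1}). -/
open scoped Classical
open Filter

noncomputable section

/-! Choosing the `k` fixed points and deranging the rest gives
`P(W = k) = (n choose k) e(n-k)/n! = (1/k!) ∑_{j ≤ n-k} (-1)^j/j!`, a partial sum of the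
alternating series for `e⁻¹/k!`; hence `|P(W = k) - e⁻¹/k!| ≤ 1/(k! (n+1-k)!)`. Summing over
`k ≤ n` gives `(2^(n+1) - 1)/(n+1)!`, and the Poisson tail beyond `n` adds at most `1/(n+1)!`,
so `d_TV ≤ 2^n/(n+1)! ≤ 3(1 - e⁻¹)/n`. The same alternating-series bound gives
`|e(n) - n!/e| ≤ 1/(n+1)`. -/

open Finset Nat Equiv

lemma Real.hasSum_pow_div_factorial (x : ℝ) : HasSum (fun n ↦ x ^ n / n !) (Real.exp x) := by
  rw [Real.exp_eq_exp_ℝ]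
  exact NormedSpace.expSeries_div_hasSum_exp x

lemma abs_sum_range_neg_one_pow_div_factorial_sub_exp_neg_one_le (N : ℕ) :
    |∑ i ∈ range N, (-1 : ℝ) ^ i / (i ! : ℝ) - Real.exp (-1)| ≤ (N ! : ℝ)⁻¹ := by
  have hanti : Antitone fun i : ℕ ↦ (i ! : ℝ)⁻¹ := fun _ _ hab ↦
    inv_anti₀ (by positivity) (by exact_mod_cast Nat.factorial_le hab)
  have hsum : Summable fun i : ℕ ↦ (i ! : ℝ)⁻¹ := by
    simpa using Real.summable_pow_div_factorial 1
  have htsum : ∑' i : ℕ, (-1 : ℝ) ^ i * (i ! : ℝ)⁻¹ = Real.exp (-1) := by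
    simpa [div_eq_mul_inv] using (Real.hasSum_pow_div_factorial (-1)).tsum_eq
  rw [abs_sub_comm]
  simpa [htsum, div_eq_mul_inv] using alternating_series_error_bound _ hanti hsum N

lemma numDerangements_div_factorial (m : ℕ) :
    (numDerangements m : ℝ) / m ! = ∑ j ∈ range (m + 1), (-1 : ℝ) ^ j / j ! := by
  rw [← Int.cast_natCast, numDerangements_sum]
  push_cast
  rw [sum_div]
  refine sum_congr rfl fun k hk ↦ ?_
  have hkm : k ≤ m := mem_range_succ_iff.mp hk
  rw [Nat.ascFactorial_eq_div, add_tsub_cancel_of_le hkm]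
  push_cast [Nat.factorial_dvd_factorial hkm]
  field_simp

section FixedPoints

variable {α : Type*} [Fintype α] [DecidableEq α]

lemma card_filter_fixedPoints_eq (s : Finset α) :
    #{σ : Perm α | ({a | σ a = a} : Finset α) = s} = numDerangements (Fintype.card α - #s) := by
  have e : {σ : Perm α // ({a | σ a = a} : Finset α) = s} ≃ derangements {a // a ∉ s} :=
    (Equiv.subtypeEquivRight fun σ ↦ by
      rw [Finset.ext_iff]
      simp [Function.mem_fixedPoints, Function.IsFixedPt, iff_comm]).trans
      (derangements.subtypeEquiv (· ∉ s)).symm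
  rw [← Fintype.card_subtype, Fintype.card_congr e, card_derangements_eq_numDerangements,
    Fintype.card_subtype_compl, Fintype.card_coe]

lemma card_filter_card_fixedPoints_eq (k : ℕ) :
    #{σ : Perm α | #{a | σ a = a} = k}
      = (Fintype.card α).choose k * numDerangements (Fintype.card α - k) := by
  rw [card_eq_sum_card_fiberwise (f := fun σ : Perm α ↦ ({a | σ a = a} : Finset α))
    (t := powersetCard k univ) fun σ hσ ↦ by simpa using hσ]
  rw [sum_congr rfl fun s hs ↦ ?_, sum_const, card_powersetCard, Finset.card_univ, smul_eq_mul]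
  rw [← (mem_powersetCard.mp hs).2, ← card_filter_fixedPoints_eq]
  congr 1
  ext σ
  simp only [mem_filter, mem_univ, true_and, and_iff_right_iff_imp]
  rintro rfl
  rfl

end FixedPoints

lemma unifProb_card_fixedPoints_eq {n k : ℕ} (hk : k ≤ n) :
    unifProb {σ : Perm (Fin n) | #{i | σ i = i} = k}
      = (k ! : ℝ)⁻¹ * ∑ j ∈ range (n - k + 1), (-1 : ℝ) ^ j / (j ! : ℝ) := by
  rw [unifProb, ← coe_filter_univ, Set.ncard_coe_finset, card_filter_card_fixedPoints_eq,
    Fintype.card_fin, ← numDerangements_div_factorial, Nat.cast_mul, Nat.cast_choose ℝ hk]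
  field_simp

lemma unifProb_card_fixedPoints_eq_zero {n k : ℕ} (hk : n < k) :
    unifProb {σ : Perm (Fin n) | #{i | σ i = i} = k} = 0 := by
  rw [unifProb, ← coe_filter_univ, Set.ncard_coe_finset, card_filter_card_fixedPoints_eq,
    Fintype.card_fin, Nat.choose_eq_zero_of_lt hk, zero_mul, Nat.cast_zero, zero_div]

lemma abs_unifProb_card_fixedPoints_sub_poissonPMF_le {n k : ℕ} (hk : k ≤ n) :
    |unifProb {σ : Perm (Fin n) | #{i | σ i = i} = k} - poissonPMF 1 k|
      ≤ ((k ! : ℝ) * (n + 1 - k)!)⁻¹ := by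
  have hq : poissonPMF 1 k = (k ! : ℝ)⁻¹ * Real.exp (-1) := by
    rw [poissonPMF, one_pow, mul_one, div_eq_inv_mul, mul_comm]
  rw [unifProb_card_fixedPoints_eq hk, hq, ← mul_sub, abs_mul, abs_of_pos (by positivity),
    mul_inv, Nat.sub_add_comm hk]
  gcongr
  exact abs_sum_range_neg_one_pow_div_factorial_sub_exp_neg_one_le _

lemma sum_range_inv_factorial_mul_factorial (n : ℕ) :
    ∑ k ∈ range (n + 1), ((k ! : ℝ) * (n + 1 - k)!)⁻¹ = (2 ^ (n + 1) - 1) / (n + 1)! := by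
  have hchoose : ∑ k ∈ range (n + 1), ((n + 1).choose k : ℝ) = 2 ^ (n + 1) - 1 := by
    have := Nat.sum_range_choose (n + 1)
    rw [sum_range_succ, Nat.choose_self] at this
    rw [eq_sub_iff_add_eq]
    exact_mod_cast this
  rw [← hchoose, sum_div]
  refine sum_congr rfl fun k hk ↦ ?_
  rw [Nat.cast_choose ℝ (by simp at hk; omega)]
  field_simp

lemma poissonPMF_nonneg {lam : ℝ} (hlam : 0 ≤ lam) (k : ℕ) : 0 ≤ poissonPMF lam k := by
  unfold poissonPMF
  positivity

lemma summable_poissonPMF (lam : ℝ) : Summable (poissonPMF lam) :=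
  ((Real.summable_pow_div_factorial lam).mul_left (Real.exp (-lam))).congr fun k ↦ by
    rw [poissonPMF, mul_div_assoc]

lemma tsum_poissonPMF_one_add_le (m : ℕ) : ∑' k, poissonPMF 1 (k + m) ≤ (m ! : ℝ)⁻¹ := by
  have hexp : HasSum (fun k : ℕ ↦ (k ! : ℝ)⁻¹) (Real.exp 1) := by
    simpa using Real.hasSum_pow_div_factorial 1
  have hle : ∀ k, poissonPMF 1 (k + m) ≤ Real.exp (-1) * (m ! : ℝ)⁻¹ * (k ! : ℝ)⁻¹ := fun k ↦ by
    rw [poissonPMF, one_pow, mul_one, mul_assoc, ← mul_inv, div_eq_mul_inv]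
    gcongr
    rw [mul_comm]
    exact_mod_cast Nat.le_of_dvd (factorial_pos _) (factorial_mul_factorial_dvd_factorial_add k m)
  have hdom := hexp.mul_left (Real.exp (-1) * (m ! : ℝ)⁻¹)
  calc ∑' k, poissonPMF 1 (k + m)
      ≤ Real.exp (-1) * (m ! : ℝ)⁻¹ * Real.exp 1 :=
        hdom.tsum_eq ▸ (hdom.summable.of_nonneg_of_le (fun k ↦ poissonPMF_nonneg zero_le_one _)
          hle).tsum_le_tsum hle hdom.summable
    _ = (m ! : ℝ)⁻¹ := by
        rw [mul_right_comm, ← Real.exp_add, neg_add_cancel, Real.exp_zero, one_mul]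

theorem dTVNatUnif_card_fixedPoints_le (n : ℕ) :
    dTVNatUnif (fun σ : Perm (Fin n) ↦ #{i | σ i = i}) 1 ≤ 2 ^ n / (n + 1)! := by
  set p : ℕ → ℝ := fun k ↦ unifProb {σ : Perm (Fin n) | #{i | σ i = i} = k}
  have hp : ∀ k, n < k → p k = 0 := fun k hk ↦ unifProb_card_fixedPoints_eq_zero hk
  have hsummable : Summable fun k ↦ |p k - poissonPMF 1 k| :=
    ((summable_of_ne_finset_zero (s := range (n + 1)) fun k hk ↦ hp k (by simpa using hk)).sub
      (summable_poissonPMF 1)).abs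
  have hsplit : ∑' k, |p k - poissonPMF 1 k|
      = ∑ k ∈ range (n + 1), |p k - poissonPMF 1 k| + ∑' k, poissonPMF 1 (k + (n + 1)) := by
    rw [← hsummable.sum_add_tsum_nat_add (n + 1)]
    congr 1
    refine tsum_congr fun k ↦ ?_
    rw [hp _ (by omega), zero_sub, abs_neg, abs_of_nonneg (poissonPMF_nonneg zero_le_one _)]
  have hhead : ∑ k ∈ range (n + 1), |p k - poissonPMF 1 k| ≤ (2 ^ (n + 1) - 1) / (n + 1)! :=
    sum_range_inv_factorial_mul_factorial n ▸ sum_le_sum fun k hk ↦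
      abs_unifProb_card_fixedPoints_sub_poissonPMF_le (by simp at hk; omega)
  calc dTVNatUnif (fun σ : Perm (Fin n) ↦ #{i | σ i = i}) 1
      = (1 / 2) * ∑' k, |p k - poissonPMF 1 k| := rfl
    _ ≤ (1 / 2) * ((2 ^ (n + 1) - 1) / (n + 1)! + ((n + 1)! : ℝ)⁻¹) := by
        rw [hsplit]
        gcongr
        exact tsum_poissonPMF_one_add_le (n + 1)
    _ = 2 ^ n / (n + 1)! := by
        field_simp
        ring

lemma abs_numDerangements_sub_factorial_mul_exp_neg_one_le (n : ℕ) :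
    |(numDerangements n : ℝ) - n ! * Real.exp (-1)| ≤ (n + 1 : ℝ)⁻¹ := by
  have hn : (0 : ℝ) < n ! := by positivity
  calc |(numDerangements n : ℝ) - n ! * Real.exp (-1)|
      = n ! * |(numDerangements n : ℝ) / (n ! : ℝ) - Real.exp (-1)| := by
        rw [← abs_of_pos hn, ← abs_mul, abs_of_pos hn, mul_sub, mul_div_cancel₀ _ hn.ne']
    _ ≤ n ! * ((n + 1)! : ℝ)⁻¹ := by
        rw [numDerangements_div_factorial]
        gcongr
        exact abs_sum_range_neg_one_pow_div_factorial_sub_exp_neg_one_le (n + 1)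
    _ = (n + 1 : ℝ)⁻¹ := by
        rw [factorial_succ]
        push_cast
        field_simp

lemma two_mul_mul_two_pow_le_three_mul_factorial (n : ℕ) : 2 * n * 2 ^ n ≤ 3 * (n + 1)! := by
  obtain hn | hn := lt_or_ge n 2
  · interval_cases n <;> decide
  induction n, hn using Nat.le_induction with
  | base => decide
  | succ m hm ih =>
    have h1 : 2 * (m + 1) * 2 ^ m ≤ 3 * m * 2 ^ m := Nat.mul_le_mul_right _ (by omega)
    have h2 : 3 * (m + 1)! ≤ (m + 2) * (m + 1)! := Nat.mul_le_mul_right _ (by omega)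
    rw [factorial_succ, pow_succ]
    nlinarith

lemma two_pow_div_factorial_succ_le {n : ℕ} (hn : 1 ≤ n) :
    (2 ^ n / (n + 1)! : ℝ) ≤ 3 * (1 - Real.exp (-1)) / n := by
  have hexp := Real.exp_neg_one_lt_half
  have hnat : (2 * n * 2 ^ n : ℝ) ≤ 3 * (n + 1)! := by
    exact_mod_cast two_mul_mul_two_pow_le_three_mul_factorial n
  rw [div_le_div_iff₀ (by positivity) (by positivity)]
  nlinarith

/-- The number of fixed points of a uniformly random permutation of `[n]` is within total
variation `3(1−e⁻¹)/n` of Poisson(1), and consequently the number of derangements `e(n)`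
satisfies `n!·e⁻¹ − 3·(n−1)!·(1−e⁻¹) ≤ e(n) ≤ n!·e⁻¹ + 3·(n−1)!·(1−e⁻¹)`. -/
theorem stmt12 (n : ℕ) (hn : 1 ≤ n)
    (W : Equiv.Perm (Fin n) → ℕ)
    (hW : ∀ σ, W σ = (Finset.univ.filter fun i : Fin n => σ i = i).card)
    (e : ℕ)
    (he : e = Set.ncard {σ : Equiv.Perm (Fin n) | ∀ i, σ i ≠ i}) :
    dTVNatUnif W 1 ≤ 3 * (1 - Real.exp (-1)) / (n : ℝ)
    ∧ (n.factorial : ℝ) * Real.exp (-1)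
        - 3 * ((n - 1).factorial : ℝ) * (1 - Real.exp (-1)) ≤ (e : ℝ)
    ∧ (e : ℝ) ≤ (n.factorial : ℝ) * Real.exp (-1)
        + 3 * ((n - 1).factorial : ℝ) * (1 - Real.exp (-1)) := by
  obtain rfl : W = fun σ ↦ #{i | σ i = i} := funext hW
  obtain rfl : e = numDerangements n := by
    rw [he, ← card_derangements_fin_eq_numDerangements (n := n), ← Nat.card_eq_fintype_card,
      Nat.card_coe_set_eq]
    rfl
  have hD := abs_le.mp (abs_numDerangements_sub_factorial_mul_exp_neg_one_le n)
  have hslack : (n + 1 : ℝ)⁻¹ ≤ 3 * (n - 1)! * (1 - Real.exp (-1)) := by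
    have : (1 : ℝ) ≤ (n - 1)! := by exact_mod_cast (n - 1).factorial_pos
    have : (n + 1 : ℝ)⁻¹ ≤ 1 := inv_le_one_of_one_le₀ (by linarith [n.cast_nonneg (α := ℝ)])
    nlinarith [Real.exp_neg_one_lt_half]
  exact ⟨(dTVNatUnif_card_fixedPoints_le n).trans (two_pow_div_factorial_succ_le hn),
    by linarith, by linarith⟩
end
end

section
/- Fix q > 0 and let Σ_n be a random permutation of [n] from the Mallows(q) distribution. Then the Mallows(q) family is consecutively homogeneous: for all 1 ≤ m ≤ n, all 1 ≤ i ≤ n−m+1, and every σ ∈ S_m, P( red( Σ_n(i) Σ_n(i+1) ⋯ Σ_n(i+m−1) ) = σ ) = q^{inv(σ)}/I_m(q); that is, the reduction of any window of m consecutive positions of Σ_n is itself Mallows(q)-distributed on S_m. Moreover, if q = 1, homogeneity holds for arbitrary (not necessarily consecutive) subsequences 1 ≤ i_1 < ⋯ < i_m ≤ n: P( red( Σ_n(i_1) ⋯ Σ_n(i_m) ) = σ ) = 1/m!. -/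
open scoped Classical
open Filter

noncomputable section

open Finset Function

/-!
Right multiplication by `extendAlong hf τ`, which permutes the positions `f 0, …, f (m-1)`
according to `τ`, turns the reduction `red (π ∘ f)` into `red (π ∘ f) * τ`. So every fibre of
`π ↦ red (π ∘ f)` is a translate of the fibre over `1`, which gives uniformity when `q = 1`.
When the positions are consecutive they form an interval, so permuting them does not change the
relative order of a position inside and one outside the window; hence for `π` increasing on the
window, `inv (π * extendAlong hf τ) = inv τ + inv π`, and the `q`-weight of the fibre over `τ`
is `q ^ inv τ` times that of the fibre over `1`. Normalising with
`∑ π ∈ S_n, q ^ inv π = I_n(q)` gives the claim.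
-/

section Reduction

variable {α : Type*} [LinearOrder α] {m : ℕ}

-- `Tuple.sort g` lists the positions in increasing order of their values; its inverse sends
-- each position to the rank of its value.
def reduction (g : Fin m → α) : Equiv.Perm (Fin m) := (Tuple.sort g)⁻¹

lemma reduction_lt_reduction_iff {g : Fin m → α} (hg : Injective g) (k l : Fin m) :
    reduction g k < reduction g l ↔ g k < g l := by
  have hmono : StrictMono (g ∘ Tuple.sort g) :=
    (Tuple.monotone_sort g).strictMono_of_injective (hg.comp (Tuple.sort g).injective)
  have hg_eq : ∀ k, g k = (g ∘ Tuple.sort g) (reduction g k) := fun k => by simp [reduction]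
  rw [hg_eq k, hg_eq l, hmono.lt_iff_lt]

lemma reduction_eq_iff {g : Fin m → α} (hg : Injective g) (σ : Equiv.Perm (Fin m)) :
    reduction g = σ ↔ ∀ k l, g k < g l ↔ σ k < σ l := by
  refine ⟨fun h k l => h ▸ (reduction_lt_reduction_iff hg k l).symm, fun h => ?_⟩
  have hmono : Monotone (σ * (reduction g)⁻¹) := by
    refine StrictMono.monotone fun a b hab => ?_
    rw [Equiv.Perm.mul_apply, Equiv.Perm.mul_apply, ← h, ← reduction_lt_reduction_iff hg]
    simpa using hab
  rw [Equiv.Perm.monotone_iff, mul_inv_eq_one] at hmono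
  exact hmono.symm

lemma reduction_comp_perm {g : Fin m → α} (hg : Injective g) (τ : Equiv.Perm (Fin m)) :
    reduction (g ∘ τ) = reduction g * τ := by
  rw [reduction_eq_iff (hg.comp τ.injective)]
  intro k l
  simp [reduction_lt_reduction_iff hg]

end Reduction

section Inversions

variable {n : ℕ}

def outerInvCount (W : Set (Fin n)) (π : Equiv.Perm (Fin n)) : ℕ :=
  #{p : Fin n × Fin n | (p.1 < p.2 ∧ π p.2 < π p.1) ∧ ¬(p.1 ∈ W ∧ p.2 ∈ W)}

lemma invCount_one : invCount (1 : Equiv.Perm (Fin n)) = 0 := by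
  rw [invCount, card_eq_zero, filter_eq_empty_iff]
  exact fun _ _ h => lt_asymm h.1 h.2

lemma invCount_eq_invCount_reduction_add {m : ℕ} {f : Fin m → Fin n} (hf : StrictMono f)
    (π : Equiv.Perm (Fin n)) :
    invCount π = invCount (reduction (π ∘ f)) + outerInvCount (Set.range f) π := by
  have hπf : Injective (π ∘ f) := π.injective.comp hf.injective
  rw [invCount, outerInvCount, ← card_filter_add_card_filter_not
    (fun p : Fin n × Fin n => p.1 ∈ Set.range f ∧ p.2 ∈ Set.range f)]
  simp only [filter_filter]
  congr 1
  · symm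
    apply card_nbij (Prod.map f f)
    · rintro ⟨k, l⟩ hkl
      simp only [coe_filter, mem_univ, true_and, Set.mem_ofPred_eq,
        reduction_lt_reduction_iff hπf] at hkl
      simp only [coe_filter, mem_univ, true_and, Set.mem_ofPred_eq, Prod.map_fst, Prod.map_snd,
        Set.mem_range_self, and_self, and_true]
      exact ⟨hf hkl.1, hkl.2⟩
    · exact (hf.injective.prodMap hf.injective).injOn
    · intro p hp
      simp only [coe_filter, mem_univ, true_and, Set.mem_ofPred_eq] at hp
      obtain ⟨⟨hlt, hinv⟩, ⟨k, hk⟩, ⟨l, hl⟩⟩ := hp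
      obtain ⟨_, _⟩ := p
      subst hk hl
      refine ⟨(k, l), ?_, rfl⟩
      simp only [coe_filter, mem_univ, true_and, Set.mem_ofPred_eq,
        reduction_lt_reduction_iff hπf]
      exact ⟨hf.lt_iff_lt.1 hlt, hinv⟩
  · -- the two filters differ only in their decidability instances
    convert rfl

lemma apply_mem_iff_of_forall_notMem {α : Type*} {W : Set α} {ρ : Equiv.Perm α}
    (hρ : ∀ x ∉ W, ρ x = x) (x : α) : ρ x ∈ W ↔ x ∈ W := by
  refine ⟨fun h => ?_, fun hx => ?_⟩
  · by_contra hx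
    exact hx (hρ x hx ▸ h)
  · by_contra h
    exact h (by rwa [ρ.injective (hρ _ h)])

lemma apply_lt_apply_of_ordConnected {α : Type*} [LinearOrder α] {W : Set α}
    (hW : W.OrdConnected) {ρ : Equiv.Perm α} (hρ : ∀ x ∉ W, ρ x = x) {a b : α} (hab : a < b)
    (hout : ¬(a ∈ W ∧ b ∈ W)) : ρ a < ρ b := by
  have hmaps : ∀ x ∈ W, ρ x ∈ W := fun x => (apply_mem_iff_of_forall_notMem hρ x).2
  by_cases ha : a ∈ W
  · have hb : b ∉ W := fun hb => hout ⟨ha, hb⟩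
    rw [hρ b hb]
    by_contra! hba
    exact hb (hW.out ha (hmaps a ha) ⟨hab.le, hba⟩)
  · rw [hρ a ha]
    by_cases hb : b ∈ W
    · by_contra! hba
      exact ha (hW.out (hmaps b hb) hb ⟨hba, hab.le⟩)
    · rwa [hρ b hb]

lemma outerInvCount_mul {W : Set (Fin n)} (hW : W.OrdConnected) {ρ : Equiv.Perm (Fin n)}
    (hρ : ∀ x ∉ W, ρ x = x) (π : Equiv.Perm (Fin n)) :
    outerInvCount W (π * ρ) = outerInvCount W π := by
  have hρ_inv : ∀ x ∉ W, ρ⁻¹ x = x := fun x hx => by rw [Equiv.Perm.inv_eq_iff_eq, hρ x hx]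
  have hmem := apply_mem_iff_of_forall_notMem hρ
  have hpairs : ∀ a b, (a < b ∧ ¬(a ∈ W ∧ b ∈ W)) ↔ (ρ a < ρ b ∧ ¬(ρ a ∈ W ∧ ρ b ∈ W)) := by
    intro a b
    rw [hmem, hmem]
    refine ⟨fun h => ⟨apply_lt_apply_of_ordConnected hW hρ h.1 h.2, h.2⟩, fun h => ⟨?_, h.2⟩⟩
    simpa using apply_lt_apply_of_ordConnected hW hρ_inv h.1 (by rw [hmem, hmem]; exact h.2)
  apply card_equiv (ρ.prodCongr ρ)
  rintro ⟨a, b⟩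
  rw [mem_filter, mem_filter]
  simp only [mem_univ, true_and, Equiv.prodCongr_apply, Prod.map, Equiv.Perm.mul_apply]
  have := hpairs a b
  tauto

end Inversions

section Transport

variable {m n : ℕ} {f : Fin m → Fin n}

def extendAlong (hf : Injective f) (τ : Equiv.Perm (Fin m)) : Equiv.Perm (Fin n) :=
  τ.extendDomain (Equiv.ofInjective f hf)

lemma extendAlong_apply (hf : Injective f) (τ : Equiv.Perm (Fin m)) (k : Fin m) :
    extendAlong hf τ (f k) = f (τ k) :=
  τ.extendDomain_apply_image (Equiv.ofInjective f hf) k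

lemma extendAlong_apply_of_notMem (hf : Injective f) (τ : Equiv.Perm (Fin m)) {x : Fin n}
    (hx : x ∉ Set.range f) : extendAlong hf τ x = x :=
  τ.extendDomain_apply_not_subtype (Equiv.ofInjective f hf) hx

lemma reduction_mul_extendAlong (hf : Injective f) (π : Equiv.Perm (Fin n))
    (τ : Equiv.Perm (Fin m)) :
    reduction (⇑(π * extendAlong hf τ) ∘ f) = reduction (⇑π ∘ f) * τ := by
  have hcomp : ⇑(π * extendAlong hf τ) ∘ f = (⇑π ∘ f) ∘ τ :=
    funext fun k => by simp [extendAlong_apply]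
  rw [hcomp, reduction_comp_perm (π.injective.comp hf)]

lemma invCount_mul_extendAlong (hf : StrictMono f) (hW : (Set.range f).OrdConnected)
    {π : Equiv.Perm (Fin n)} (hπ : reduction (⇑π ∘ f) = 1) (τ : Equiv.Perm (Fin m)) :
    invCount (π * extendAlong hf.injective τ) = invCount τ + invCount π := by
  have hπ_inv := invCount_eq_invCount_reduction_add hf π
  rw [hπ, invCount_one, zero_add] at hπ_inv
  rw [invCount_eq_invCount_reduction_add hf, reduction_mul_extendAlong, hπ, one_mul,
    outerInvCount_mul hW (fun _ => extendAlong_apply_of_notMem _ τ), hπ_inv]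

def reductionFiber (f : Fin m → Fin n) (σ : Equiv.Perm (Fin m)) : Finset (Equiv.Perm (Fin n)) :=
  univ.filter fun π => reduction (⇑π ∘ f) = σ

lemma mem_reductionFiber {σ : Equiv.Perm (Fin m)} {π : Equiv.Perm (Fin n)} :
    π ∈ reductionFiber f σ ↔ reduction (⇑π ∘ f) = σ := by
  simp [reductionFiber]

lemma sum_reductionFiber_eq {M : Type*} [AddCommMonoid M] (hf : Injective f)
    (w : Equiv.Perm (Fin n) → M) (τ : Equiv.Perm (Fin m)) :
    ∑ π ∈ reductionFiber f τ, w π = ∑ π ∈ reductionFiber f 1, w (π * extendAlong hf τ) := by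
  refine (sum_equiv (Equiv.mulRight (extendAlong hf τ)) (fun π => ?_) fun _ _ => rfl).symm
  simp only [mem_reductionFiber, Equiv.coe_mulRight, reduction_mul_extendAlong, mul_eq_right]

lemma sum_reductionFiber_div_sum {K : Type*} [Field K] (hf : Injective f)
    (w : Equiv.Perm (Fin n) → K) (c : Equiv.Perm (Fin m) → K)
    (hw : ∀ π ∈ reductionFiber f 1, ∀ τ, w (π * extendAlong hf τ) = c τ * w π)
    (htot : ∑ π, w π ≠ 0) (σ : Equiv.Perm (Fin m)) :
    (∑ π ∈ reductionFiber f σ, w π) / ∑ π, w π = c σ / ∑ τ, c τ := by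
  set S₁ := ∑ π ∈ reductionFiber f 1, w π
  have hfiber : ∀ τ, ∑ π ∈ reductionFiber f τ, w π = c τ * S₁ := fun τ => by
    rw [sum_reductionFiber_eq hf, mul_sum]
    exact sum_congr rfl fun π hπ => hw π hπ τ
  have htotal : ∑ π, w π = (∑ τ, c τ) * S₁ := by
    rw [← sum_fiberwise univ (fun π : Equiv.Perm (Fin n) => reduction (⇑π ∘ f)) w, sum_mul]
    exact sum_congr rfl fun τ _ => hfiber τ
  rw [htotal] at htot ⊢
  rw [hfiber]
  exact mul_div_mul_right _ _ (right_ne_zero_of_mul htot)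

end Transport

section GeneratingFunction

variable {n : ℕ}

def consPerm (v : Fin (n + 1)) (τ : Equiv.Perm (Fin n)) : Equiv.Perm (Fin (n + 1)) :=
  (finSuccEquiv n).trans ((Equiv.optionCongr τ).trans (finSuccEquiv' v).symm)

@[simp]
lemma consPerm_zero (v : Fin (n + 1)) (τ : Equiv.Perm (Fin n)) : consPerm v τ 0 = v := by
  simp [consPerm]

@[simp]
lemma consPerm_succ (v : Fin (n + 1)) (τ : Equiv.Perm (Fin n)) (k : Fin n) :
    consPerm v τ k.succ = v.succAbove (τ k) := by
  simp [consPerm, finSuccEquiv'_symm_some]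

lemma consPerm_bijective :
    Bijective fun p : Fin (n + 1) × Equiv.Perm (Fin n) => consPerm p.1 p.2 := by
  rw [Fintype.bijective_iff_injective_and_card]
  refine ⟨fun ⟨v, τ⟩ ⟨v', τ'⟩ h => ?_, ?_⟩
  · have hv : v = v' := by simpa using congr($h 0)
    subst hv
    have hτ : τ = τ' :=
      Equiv.ext fun k => v.succAbove_right_injective (by simpa using congr($h k.succ))
    rw [hτ]
  · simp only [Fintype.card_prod, Fintype.card_fin, Fintype.card_perm, Nat.factorial_succ]

lemma invCount_eq_sum (π : Equiv.Perm (Fin n)) :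
    invCount π = ∑ a, ∑ b, if a < b ∧ π b < π a then 1 else 0 := by
  rw [invCount, card_filter, ← Fintype.sum_prod_type']

lemma invCount_consPerm (v : Fin (n + 1)) (τ : Equiv.Perm (Fin n)) :
    invCount (consPerm v τ) = v + invCount τ := by
  have hfirst : ∑ l, (if (τ l).castSucc < v then 1 else 0) = (v : ℕ) := by
    rw [Equiv.sum_comp τ (fun j => if j.castSucc < v then 1 else 0), sum_boole]
    simp only [Fin.lt_def, Fin.val_castSucc, Nat.cast_id, Fin.card_filter_val_lt,
      min_eq_right v.is_le]
  simp only [invCount_eq_sum, Fin.sum_univ_succ, consPerm_zero, consPerm_succ,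
    false_and, if_false, Fin.succ_pos, true_and, Fin.not_lt_zero, Fin.succ_lt_succ_iff,
    Fin.succAbove_lt_succAbove_iff, Fin.succAbove_lt_iff_castSucc_lt, zero_add, hfirst]

lemma sum_pow_invCount (q : ℝ) (n : ℕ) :
    ∑ π : Equiv.Perm (Fin n), q ^ invCount π = invPoly n q := by
  induction n with
  | zero => simp [invPoly, invCount_eq_sum]
  | succ n ih =>
    rw [← (Equiv.ofBijective _ consPerm_bijective).sum_comp, Fintype.sum_prod_type]
    simp only [Equiv.ofBijective_apply, invCount_consPerm, pow_add, ← mul_sum, ← sum_mul, ih]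
    rw [invPoly, invPoly, prod_range_succ, mul_comm, Fin.sum_univ_eq_sum_range (q ^ ·)]

end GeneratingFunction

section Mallows

variable {m n : ℕ} {f : Fin m → Fin n}

lemma mallowsProb_setOf_reduction_eq (q : ℝ) (σ : Equiv.Perm (Fin m)) :
    mallowsProb q {π : Equiv.Perm (Fin n) | reduction (⇑π ∘ f) = σ}
      = (∑ π ∈ reductionFiber f σ, q ^ invCount π) / ∑ π : Equiv.Perm (Fin n), q ^ invCount π := by
  rw [mallowsProb, sum_pow_invCount]
  congr 2
  ext π
  simp [mem_reductionFiber]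

theorem mallowsProb_reduction_eq_of_ordConnected {q : ℝ} (hq : 0 < q) (hf : StrictMono f)
    (hW : (Set.range f).OrdConnected) (σ : Equiv.Perm (Fin m)) :
    mallowsProb q {π : Equiv.Perm (Fin n) | reduction (⇑π ∘ f) = σ}
      = q ^ invCount σ / invPoly m q := by
  rw [mallowsProb_setOf_reduction_eq, ← sum_pow_invCount q m]
  refine sum_reductionFiber_div_sum hf.injective (fun π => q ^ invCount π)
    (fun τ => q ^ invCount τ) (fun π hπ τ => ?_) ?_ σ
  · rw [invCount_mul_extendAlong hf hW (mem_reductionFiber.1 hπ), pow_add]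
  · exact (sum_pos (fun π _ => pow_pos hq _) univ_nonempty).ne'

theorem mallowsProb_one_reduction_eq (hf : Injective f) (σ : Equiv.Perm (Fin m)) :
    mallowsProb 1 {π : Equiv.Perm (Fin n) | reduction (⇑π ∘ f) = σ} = 1 / m.factorial := by
  rw [mallowsProb_setOf_reduction_eq]
  have := sum_reductionFiber_div_sum hf (fun π => (1 : ℝ) ^ invCount π) (fun _ => 1)
    (fun π _ τ => by simp) (by simp) σ
  simpa [Fintype.card_perm] using this

lemma ordConnected_range_castLE_natAdd {i : ℕ} (h : i + m ≤ n) :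
    (Set.range (Fin.castLE h ∘ Fin.natAdd i : Fin m → Fin n)).OrdConnected := by
  refine ⟨?_⟩
  rintro _ ⟨a, rfl⟩ _ ⟨b, rfl⟩ x ⟨hax, hxb⟩
  simp only [Function.comp_apply, Fin.le_def, Fin.val_castLE, Fin.val_natAdd] at hax hxb
  exact ⟨⟨x - i, by omega⟩, Fin.ext (by simp; omega)⟩

end Mallows

/-- Lemma: the Mallows(q) family is consecutively homogeneous: the reduction of any window
of `m` consecutive positions of a Mallows(q) permutation of `[n]` is Mallows(q) on `S_m`;
moreover for `q = 1` homogeneity holds for arbitrary subsequences. -/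
theorem stmt13 (q : ℝ) (hq : 0 < q) :
    (∀ n m i : ℕ, 1 ≤ m → m ≤ n → i + m ≤ n → ∀ σ : Equiv.Perm (Fin m),
      mallowsProb q {πn : Equiv.Perm (Fin n) | OccursConsec σ πn i}
        = q ^ invCount σ / invPoly m q)
    ∧ (∀ n m : ℕ, ∀ f : Fin m → Fin n, StrictMono f → ∀ σ : Equiv.Perm (Fin m),
      mallowsProb 1 {πn : Equiv.Perm (Fin n) | OccursAt σ πn f}
        = 1 / (m.factorial : ℝ)) := by
  refine ⟨fun n m i _ _ him σ => ?_, fun n m f hf σ => ?_⟩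
  · have hwin : StrictMono (Fin.castLE him ∘ Fin.natAdd i : Fin m → Fin n) :=
      (Fin.strictMono_castLE him).comp (Fin.strictMono_natAdd i)
    rw [← mallowsProb_reduction_eq_of_ordConnected hq hwin
      (ordConnected_range_castLE_natAdd him) σ]
    congr 1
    ext π
    simp only [Set.mem_ofPred_eq, OccursConsec, him, exists_true_left,
      reduction_eq_iff (π.injective.comp hwin.injective)]
    rfl
  · rw [← mallowsProb_one_reduction_eq hf.injective σ]
    congr 1
    ext π
    simp only [Set.mem_ofPred_eq, OccursAt, hf, true_and,
      reduction_eq_iff (π.injective.comp hf.injective)]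
    rfl

end
end
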